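/- arXiv:1503.00583 — 7 statements merged into one kernel-verified Lean document; each statement's English description precedes it below -/
import Mathlib

section
/- Let b_1,...,b_n be nonnegative integers whose support {k : b_k ≠ 0} has greatest common divisor 1 and with Σ b_k > 1, and let h(t) = Σ_{k=1}^n b_k t^k. Let r ∈ (0,1) be the unique real number with h(r) = 1. Then r is the unique complex number z with |z| = r satisfying h(z) = 1. -/
/-!
If `h(z) = 1` with `|z| = r`, then `1 = |h(z)| ≤ h(r) = 1`, so the triangle inequality is an
equality and every term `b_k z^k` is a nonnegative real. Hence `z^k = r^k` for every `k` in the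
support, so `z / r` is a root of unity whose order divides the gcd of the support, which is `1`.
-/

open Finset

theorem Complex.eq_norm_of_sum_eq_sum_norm {ι : Type*} {s : Finset ι} {f : ι → ℂ}
    (h : ∑ i ∈ s, f i = ∑ i ∈ s, (‖f i‖ : ℂ)) (i : ι) (hi : i ∈ s) : f i = ‖f i‖ := by
  have hre : ∑ i ∈ s, (f i).re = ∑ i ∈ s, ‖f i‖ := by
    simpa only [Complex.re_sum, Complex.ofReal_re] using congrArg Complex.re h
  have hi_re : (f i).re = ‖f i‖ :=
    (sum_eq_sum_iff_of_le fun j _ => Complex.re_le_norm (f j)).1 hre i hi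
  have hi_im : (f i).im = 0 :=
    Complex.abs_re_eq_norm.1 (by rw [hi_re, abs_norm])
  exact Complex.ext (by simp [hi_re]) (by simp [hi_im])

theorem eq_one_of_pow_eq_one_of_gcd_eq_one {M ι : Type*} [Monoid M] {s : Finset ι} {d : ι → ℕ}
    (hs : s.gcd d = 1) {x : M} (hx : ∀ i ∈ s, x ^ d i = 1) : x = 1 := by
  have : orderOf x ∣ s.gcd d := Finset.dvd_gcd fun i hi => orderOf_dvd_of_pow_eq_one (hx i hi)
  rwa [hs, Nat.dvd_one, orderOf_eq_one_iff] at this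

theorem Complex.eq_norm_of_pow_eq_norm_pow {ι : Type*} {s : Finset ι} {d : ι → ℕ}
    (hs : s.gcd d = 1) {z : ℂ} (hz : ∀ i ∈ s, z ^ d i = (‖z‖ : ℂ) ^ d i) : z = ‖z‖ := by
  rcases eq_or_ne z 0 with rfl | hz0
  · simp
  have hnorm : (‖z‖ : ℂ) ≠ 0 := Complex.ofReal_ne_zero.2 (norm_ne_zero_iff.2 hz0)
  have : z / ‖z‖ = 1 := eq_one_of_pow_eq_one_of_gcd_eq_one hs fun i hi => by
    rw [div_pow, hz i hi, div_self (pow_ne_zero _ hnorm)]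
  exact (div_eq_one_iff_eq hnorm).1 this

theorem stmt_2_general (n : ℕ) (b : Fin n → ℕ)
    (hgcd : (Finset.univ.filter (fun k : Fin n => b k ≠ 0)).gcd
      (fun k => (k : ℕ) + 1) = 1)
    (r : ℝ)
    (hroot : (∑ k, (b k : ℝ) * r ^ ((k : ℕ) + 1)) = 1) :
    ∀ z : ℂ, ‖z‖ = r →
      (∑ k, (b k : ℂ) * z ^ ((k : ℕ) + 1)) = 1 → z = (r : ℂ) := by
  rintro z rfl hz
  have hnorm (k : Fin n) : ‖(b k : ℂ) * z ^ ((k : ℕ) + 1)‖ = b k * ‖z‖ ^ ((k : ℕ) + 1) := by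
    simp
  have hsum_norm : ∑ k, (b k : ℂ) * z ^ ((k : ℕ) + 1)
      = ∑ k, (‖(b k : ℂ) * z ^ ((k : ℕ) + 1)‖ : ℂ) := by
    simp only [hnorm]
    rw [hz, ← Complex.ofReal_sum, hroot, Complex.ofReal_one]
  have hterm := Complex.eq_norm_of_sum_eq_sum_norm hsum_norm
  refine Complex.eq_norm_of_pow_eq_norm_pow hgcd fun k hk => ?_
  have hbk : (b k : ℂ) ≠ 0 := Nat.cast_ne_zero.2 (mem_filter.1 hk).2
  refine mul_left_cancel₀ hbk ?_
  simpa [hnorm] using hterm k (mem_univ k)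

theorem stmt_2 (n : ℕ) (b : Fin n → ℕ)
    (hgcd : (Finset.univ.filter (fun k : Fin n => b k ≠ 0)).gcd
      (fun k => (k : ℕ) + 1) = 1)
    (hsum : 1 < ∑ k, b k)
    (r : ℝ) (hr : r ∈ Set.Ioo (0 : ℝ) 1)
    (hroot : (∑ k, (b k : ℝ) * r ^ ((k : ℕ) + 1)) = 1) :
    ∀ z : ℂ, ‖z‖ = r →
      (∑ k, (b k : ℂ) * z ^ ((k : ℕ) + 1)) = 1 → z = (r : ℂ) :=
  stmt_2_general n b hgcd r hroot
end

section
/- The polynomial g(t) = t^5 + 2t^4 + 2t^3 + t^2 - 1 has a unique real root r in the open interval (0,1), and g has no other complex root of absolute value equal to r. -/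
/-!
Write `g = h - 1` with `h = t⁵ + 2t⁴ + 2t³ + t²`. Since `h` has nonnegative coefficients it is
strictly increasing on `[0, ∞)`, and `h 0 = 0 < 1 < 6 = h 1` gives the unique root `r ∈ (0, 1)`.
If `g z = 0` and `|z| = r`, then `1 = Re h(z) ≤ h(|z|) = 1`, so equality holds in the triangle
inequality and every monomial of `h` is real and positive at `z`; in particular `z² = r²` and
`z³ = r³`, and since `gcd(2, 3) = 1` this forces `z = r`.
-/

open Polynomial Set

lemma eq_of_pow_eq_pow_of_coprime {K : Type*} [CommGroupWithZero K] {a b : K} {m n : ℕ}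
    (hmn : m.Coprime n) (hm : a ^ m = b ^ m) (hn : a ^ n = b ^ n) : a = b := by
  rcases eq_or_ne b 0 with rfl | hb
  · obtain hm0 | hn0 : m ≠ 0 ∨ n ≠ 0 := by
      by_contra! h
      simp [h.1, h.2] at hmn
    · exact (pow_eq_zero_iff hm0).mp (hm.trans (zero_pow hm0))
    · exact (pow_eq_zero_iff hn0).mp (hn.trans (zero_pow hn0))
  · rw [← div_eq_one_iff_eq hb, ← pow_eq_one_iff_of_coprime hmn, div_pow, div_pow, hm, hn,
      div_self (pow_ne_zero _ hb), div_self (pow_ne_zero _ hb)]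
    exact ⟨rfl, rfl⟩

namespace Polynomial

variable {p : ℝ[X]}

theorem strictMonoOn_eval_of_coeff_nonneg (hp : ∀ n, 0 ≤ p.coeff n) (hdeg : p.natDegree ≠ 0) :
    StrictMonoOn (fun x => p.eval x) (Ici 0) := by
  intro x hx y _ hxy
  simp only [eval_eq_sum_range]
  refine Finset.sum_lt_sum (fun i _ => mul_le_mul_of_nonneg_left
    (pow_le_pow_left₀ hx hxy.le i) (hp i)) ⟨p.natDegree, Finset.self_mem_range_succ _, ?_⟩
  have hlead : 0 < p.leadingCoeff :=
    (hp _).lt_of_ne' (leadingCoeff_ne_zero.mpr (ne_zero_of_natDegree_gt (Nat.pos_of_ne_zero hdeg)))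
  exact mul_lt_mul_of_pos_left (pow_lt_pow_left₀ hxy hx hdeg) hlead

theorem existsUnique_mem_Ioo_eval_eq_of_coeff_nonneg (hp : ∀ n, 0 ≤ p.coeff n) {a b c : ℝ}
    (ha : 0 ≤ a) (hab : a ≤ b) (hac : p.eval a < c) (hcb : c < p.eval b) :
    ∃! r, r ∈ Ioo a b ∧ p.eval r = c := by
  have hdeg : p.natDegree ≠ 0 := fun h => by
    rw [eq_C_of_natDegree_eq_zero h, eval_C] at hac hcb
    exact hac.not_gt hcb
  obtain ⟨r, hr, hrc⟩ := intermediate_value_Ioo hab p.continuous.continuousOn ⟨hac, hcb⟩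
  refine ⟨r, ⟨hr, hrc⟩, fun s ⟨hs, hsc⟩ => ?_⟩
  exact (strictMonoOn_eval_of_coeff_nonneg hp hdeg).injOn (ha.trans hs.1.le) (ha.trans hr.1.le)
    (hsc.trans hrc.symm)

theorem pow_eq_norm_pow_of_aeval_eq_eval_norm (hp : ∀ n, 0 ≤ p.coeff n) {z : ℂ}
    (hz : aeval z p = p.eval ‖z‖) {n : ℕ} (hn : p.coeff n ≠ 0) : z ^ n = (‖z‖ : ℂ) ^ n := by
  have hle : ∀ i ∈ Finset.range (p.natDegree + 1), p.coeff i * (z ^ i).re ≤ p.coeff i * ‖z‖ ^ i :=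
    fun i _ => mul_le_mul_of_nonneg_left ((Complex.re_le_norm _).trans (norm_pow z i).le) (hp i)
  have hsum : ∑ i ∈ Finset.range (p.natDegree + 1), p.coeff i * (z ^ i).re =
      ∑ i ∈ Finset.range (p.natDegree + 1), p.coeff i * ‖z‖ ^ i := by
    simpa [aeval_eq_sum_range, eval_eq_sum_range, Complex.re_sum, ← Complex.ofReal_pow] using
      congrArg Complex.re hz
  have hre : (z ^ n).re = ‖z ^ n‖ := by
    rw [norm_pow]
    exact mul_left_cancel₀ hn ((Finset.sum_eq_sum_iff_of_le hle).mp hsum n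
      (Finset.mem_range_succ_iff.mpr (le_natDegree_of_ne_zero hn)))
  rw [← Complex.ofReal_pow, ← norm_pow, Complex.norm_of_nonneg' (Complex.re_eq_norm.mp hre)]

end Polynomial

-- The polynomial `h` with `g = h - 1`.
noncomputable def pyramidPoly : ℝ[X] := X ^ 5 + 2 * X ^ 4 + 2 * X ^ 3 + X ^ 2

lemma pyramidPoly_coeff_nonneg (n : ℕ) : 0 ≤ pyramidPoly.coeff n := by
  simp only [pyramidPoly, coeff_add, coeff_ofNat_mul, coeff_X_pow]
  split_ifs <;> norm_num

lemma eval_pyramidPoly (x : ℝ) : pyramidPoly.eval x = x ^ 5 + 2 * x ^ 4 + 2 * x ^ 3 + x ^ 2 := by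
  simp [pyramidPoly]

lemma aeval_pyramidPoly (z : ℂ) : aeval z pyramidPoly = z ^ 5 + 2 * z ^ 4 + 2 * z ^ 3 + z ^ 2 := by
  simp [pyramidPoly, map_ofNat]

theorem stmt_4 :
    ∃ r : ℝ, r ∈ Set.Ioo (0 : ℝ) 1 ∧
      r ^ 5 + 2 * r ^ 4 + 2 * r ^ 3 + r ^ 2 - 1 = 0 ∧
      (∀ r' : ℝ, r' ∈ Set.Ioo (0 : ℝ) 1 →
        r' ^ 5 + 2 * r' ^ 4 + 2 * r' ^ 3 + r' ^ 2 - 1 = 0 → r' = r) ∧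
      (∀ z : ℂ, z ^ 5 + 2 * z ^ 4 + 2 * z ^ 3 + z ^ 2 - 1 = 0 →
        ‖z‖ = r → z = (r : ℂ)) := by
  obtain ⟨r, ⟨hr, hr1⟩, huniq⟩ :=
    existsUnique_mem_Ioo_eval_eq_of_coeff_nonneg pyramidPoly_coeff_nonneg le_rfl zero_le_one
      (c := 1) (by norm_num [eval_pyramidPoly]) (by norm_num [eval_pyramidPoly])
  simp only [← eval_pyramidPoly, ← aeval_pyramidPoly, sub_eq_zero]
  refine ⟨r, hr, hr1, fun s hs hs1 => huniq s ⟨hs, hs1⟩, fun z hz hzr => ?_⟩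
  subst hzr
  have hzh : aeval z pyramidPoly = ((pyramidPoly.eval ‖z‖ : ℝ) : ℂ) := by
    rw [hz, hr1, Complex.ofReal_one]
  have hpow (n : ℕ) (hn : pyramidPoly.coeff n ≠ 0) :=
    pow_eq_norm_pow_of_aeval_eq_eval_norm pyramidPoly_coeff_nonneg hzh hn
  exact eq_of_pow_eq_pow_of_coprime (m := 2) (n := 3) (by norm_num)
    (hpow 2 (by simp [pyramidPoly, coeff_X_pow])) (hpow 3 (by simp [pyramidPoly, coeff_X_pow]))
end

section
/- The polynomial g(t) = 4t^3 + t^2 + 2t - 1 has a unique real root r in the open interval (0,1), and r is the unique complex root of g of minimal absolute value; consequently 1/r is a Perron number. -/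
/-!
The cubic `g t = 4t³ + t² + 2t - 1` is strictly increasing on `ℝ`, so it has exactly one real
root `r`, which lies in `(0, 1)` since `g 0 < 0 < g 1`. Dividing out `t - r` leaves the quadratic
`4t² + (1 + 4r)t + (2 + r + 4r²)`, whose discriminant is negative; its two complex roots are
conjugate with product `(2 + r + 4r²)/4 > r²`, so both lie outside the disc of radius `r`.
Finally `1/r` is a root of the reversed monic integer cubic `t³ - 2t² - t - 4`, whose roots are
the reciprocals of those of `g`, and the minimal polynomial of `1/r` divides it.
-/

/-- A Perron number: a real algebraic integer `τ > 1` all of whose Galois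
conjugates other than `τ` itself have absolute value strictly less than `τ`. -/
def IsPerron (τ : ℝ) : Prop :=
  IsIntegral ℤ τ ∧ 1 < τ ∧
    ∀ z : ℂ, Polynomial.aeval z (minpoly ℤ τ) = 0 → z ≠ (τ : ℂ) →
      ‖z‖ < τ

open Polynomial

theorem isPerron_of_aeval_eq_zero {τ : ℝ} {p : ℤ[X]} (hp : p.Monic) (hτ : aeval τ p = 0)
    (h1 : 1 < τ) (hroots : ∀ z : ℂ, aeval z p = 0 → z ≠ (τ : ℂ) → ‖z‖ < τ) :
    IsPerron τ := by
  have hint : IsIntegral ℤ τ := ⟨p, hp, hτ⟩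
  refine ⟨hint, h1, fun z hz hne => hroots z ?_ hne⟩
  obtain ⟨q, rfl⟩ := minpoly.isIntegrallyClosed_dvd hint hτ
  rw [map_mul, hz, zero_mul]

theorem Complex.normSq_eq_div_of_quadratic_eq_zero {a b c : ℝ} (ha : a ≠ 0) {z : ℂ}
    (hz : z.im ≠ 0) (h : a * z ^ 2 + b * z + c = 0) : Complex.normSq z = c / a := by
  have hre := congrArg Complex.re h
  have him := congrArg Complex.im h
  simp only [sq, Complex.add_re, Complex.add_im, Complex.mul_re, Complex.mul_im,
    Complex.ofReal_re, Complex.ofReal_im, Complex.zero_re, Complex.zero_im] at hre him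
  have hb : b = -2 * a * z.re := by
    apply mul_right_cancel₀ hz
    linear_combination him
  rw [Complex.normSq_apply, eq_div_iff ha]
  linear_combination (-1 : ℝ) * hre + z.re * hb

theorem cubic_strictMono : StrictMono fun t : ℝ => 4 * t ^ 3 + t ^ 2 + 2 * t - 1 := by
  intro a b hab
  have hpos : 0 < 4 * (a ^ 2 + a * b + b ^ 2) + a + b + 2 := by
    nlinarith [sq_nonneg (4 * (a + b) + 1), sq_nonneg (a - b)]
  nlinarith [mul_pos (sub_pos.2 hab) hpos]

theorem exists_cubic_eq_zero_mem_Ioo :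
    ∃ r ∈ Set.Ioo (0 : ℝ) 1, 4 * r ^ 3 + r ^ 2 + 2 * r - 1 = 0 :=
  intermediate_value_Ioo zero_le_one (by fun_prop) (by norm_num)

theorem lt_norm_of_cubic_eq_zero {r : ℝ} (hr : 0 < r) (hg : 4 * r ^ 3 + r ^ 2 + 2 * r - 1 = 0)
    {z : ℂ} (hz : 4 * z ^ 3 + z ^ 2 + 2 * z - 1 = 0) (hne : z ≠ r) : r < ‖z‖ := by
  have hq : 4 * z ^ 2 + (1 + 4 * r : ℝ) * z + (2 + r + 4 * r ^ 2 : ℝ) = 0 := by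
    have hgC : 4 * (r : ℂ) ^ 3 + (r : ℂ) ^ 2 + 2 * r - 1 = 0 := by
      exact_mod_cast congrArg Complex.ofReal hg
    refine (mul_eq_zero.1 ?_).resolve_left (sub_ne_zero.2 hne)
    push_cast
    linear_combination hz - hgC
  by_cases him : z.im = 0
  · -- the quadratic factor has discriminant `-31 - 8r - 48r² < 0`
    have hx : 4 * (z.re * z.re) + (1 + 4 * r) * z.re + (2 + r + 4 * r ^ 2) = 0 := by
      rw [← Complex.re_add_im z, him, Complex.ofReal_zero, zero_mul, add_zero] at hq
      exact_mod_cast (by linear_combination hq : (4 : ℂ) * (z.re * z.re)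
        + (1 + 4 * r : ℝ) * z.re + (2 + r + 4 * r ^ 2 : ℝ) = 0)
    refine (quadratic_ne_zero_of_discrim_ne_sq (fun s hs => ?_) z.re hx).elim
    nlinarith [sq_nonneg s, discrim.eq_def (4 : ℝ) (1 + 4 * r) (2 + r + 4 * r ^ 2)]
  · have hnormSq :=
      Complex.normSq_eq_div_of_quadratic_eq_zero four_ne_zero him (by exact_mod_cast hq)
    rw [← Complex.sq_norm] at hnormSq
    exact lt_of_pow_lt_pow_left₀ 2 (norm_nonneg z) (by rw [hnormSq]; nlinarith)

noncomputable def reversedCubic : ℤ[X] := X ^ 3 - 2 * X ^ 2 - X - 4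

theorem reversedCubic_monic : reversedCubic.Monic := by
  unfold reversedCubic; monicity!

theorem aeval_reversedCubic {A : Type*} [CommRing A] [Algebra ℤ A] (x : A) :
    aeval x reversedCubic = x ^ 3 - 2 * x ^ 2 - x - 4 := by
  simp [reversedCubic, map_ofNat]

theorem cubic_inv_eq_zero_iff {K : Type*} [Field K] {x : K} (hx : x ≠ 0) :
    4 * x⁻¹ ^ 3 + x⁻¹ ^ 2 + 2 * x⁻¹ - 1 = 0 ↔ x ^ 3 - 2 * x ^ 2 - x - 4 = 0 := by
  have h :
      x ^ 3 * (4 * x⁻¹ ^ 3 + x⁻¹ ^ 2 + 2 * x⁻¹ - 1) = -(x ^ 3 - 2 * x ^ 2 - x - 4) := by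
    field_simp
    ring
  rw [← neg_eq_zero (a := x ^ 3 - 2 * x ^ 2 - x - 4), ← h, mul_eq_zero,
    or_iff_right (pow_ne_zero 3 hx)]

theorem norm_lt_of_aeval_reversedCubic_eq_zero {r : ℝ} (hr : 0 < r)
    (hg : 4 * r ^ 3 + r ^ 2 + 2 * r - 1 = 0) {z : ℂ} (hz : aeval z reversedCubic = 0)
    (hne : z ≠ ((1 / r : ℝ) : ℂ)) : ‖z‖ < 1 / r := by
  rw [aeval_reversedCubic] at hz
  have hz0 : z ≠ 0 := by rintro rfl; norm_num at hz
  have hlt := lt_norm_of_cubic_eq_zero hr hg ((cubic_inv_eq_zero_iff hz0).2 hz)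
    (fun h => hne (by rw [one_div, Complex.ofReal_inv, ← h, inv_inv]))
  rw [norm_inv] at hlt
  rwa [one_div, lt_inv_comm₀ (norm_pos_iff.2 hz0) hr]

theorem stmt_6 :
    ∃ r : ℝ, r ∈ Set.Ioo (0 : ℝ) 1 ∧
      4 * r ^ 3 + r ^ 2 + 2 * r - 1 = 0 ∧
      (∀ r' : ℝ, r' ∈ Set.Ioo (0 : ℝ) 1 →
        4 * r' ^ 3 + r' ^ 2 + 2 * r' - 1 = 0 → r' = r) ∧
      (∀ z : ℂ, 4 * z ^ 3 + z ^ 2 + 2 * z - 1 = 0 →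
        z ≠ (r : ℂ) → (r : ℝ) < ‖z‖) ∧
      IsPerron (1 / r) := by
  obtain ⟨r, hr, hg⟩ := exists_cubic_eq_zero_mem_Ioo
  refine ⟨r, hr, hg, fun r' _ hg' => cubic_strictMono.injective (hg'.trans hg.symm),
    fun z hz hne => lt_norm_of_cubic_eq_zero hr.1 hg hz hne, ?_⟩
  refine isPerron_of_aeval_eq_zero reversedCubic_monic ?_ (one_lt_one_div hr.1 hr.2)
    fun z hz hne => norm_lt_of_aeval_reversedCubic_eq_zero hr.1 hg hz hne
  rw [aeval_reversedCubic, ← cubic_inv_eq_zero_iff (one_div_ne_zero hr.1.ne'), one_div, inv_inv]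
  exact hg
end

section
/- Let g(t) = t^9 + t^8 - t^7 + 3t^6 - t^5 + t^4 + 2t^3 - 2t^2 + 3t - 1 (the denominator factor for the pyramid (3,3,3,5)). Then g has a unique root r in (0,1), and g has no other complex root of absolute value r. -/
/-! Multiplying by `t + 1` turns `g(t) = 0` into `q(t) = 1`, where
`q(t) = t^10 + 2t^9 + 2t^7 + 2t^6 + 3t^4 + t^2 + 2t` has nonnegative coefficients and a positive
linear coefficient. Such a `q` is strictly increasing on `[0, ∞)`, which gives the root `r ∈ (0, 1)`
and its uniqueness. If `|z| = r` and `q(z) = 1`, then `1 = Re q(z) = ∑ aₖ Re zᵏ ≤ ∑ aₖ rᵏ = 1`, and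
equality in the linear term forces `Re z = |z|`, that is `z = r`. -/

open Polynomial

namespace Polynomial

variable {p : ℝ[X]}

theorem one_mem_range_natDegree_add_one (h1 : p.coeff 1 ≠ 0) :
    1 ∈ Finset.range (p.natDegree + 1) :=
  Finset.mem_range.2 (Nat.lt_succ_of_le (le_natDegree_of_ne_zero h1))

theorem strictMonoOn_eval_of_coeff_nonneg_s10 (hp : ∀ n, 0 ≤ p.coeff n) (h1 : 0 < p.coeff 1) :
    StrictMonoOn p.eval (Set.Ici 0) := by
  intro x (hx : 0 ≤ x) y _ hxy
  show p.eval x < p.eval y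
  rw [eval_eq_sum_range, eval_eq_sum_range]
  refine Finset.sum_lt_sum (fun k _ => ?_) ⟨1, one_mem_range_natDegree_add_one h1.ne', ?_⟩
  · gcongr; exact hp k
  · simpa using mul_lt_mul_of_pos_left hxy h1

theorem re_aeval_lt_eval_norm (hp : ∀ n, 0 ≤ p.coeff n) (h1 : 0 < p.coeff 1) {z : ℂ}
    (hz : z.re < ‖z‖) : (aeval z p).re < p.eval ‖z‖ := by
  rw [aeval_eq_sum_range, eval_eq_sum_range, Complex.re_sum]
  refine Finset.sum_lt_sum (fun k _ => ?_) ⟨1, one_mem_range_natDegree_add_one h1.ne', ?_⟩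
  · rw [Complex.real_smul, Complex.re_ofReal_mul, ← norm_pow]
    exact mul_le_mul_of_nonneg_left (Complex.re_le_norm _) (hp k)
  · simpa using mul_lt_mul_of_pos_left hz h1

theorem eq_norm_of_re_aeval_eq_eval_norm (hp : ∀ n, 0 ≤ p.coeff n) (h1 : 0 < p.coeff 1)
    {z : ℂ} (hz : (aeval z p).re = p.eval ‖z‖) : z = ‖z‖ := by
  have hre : z.re = ‖z‖ :=
    (Complex.re_le_norm z).eq_or_lt.resolve_right fun h => (re_aeval_lt_eval_norm hp h1 h).ne hz
  have him : z.im = 0 := Complex.abs_re_eq_norm.1 (by rw [hre, abs_norm])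
  exact Complex.ext (by simpa using hre) (by simpa using him)

end Polynomial

noncomputable def q3335 : ℝ[X] := X ^ 10 + 2 * X ^ 9 + 2 * X ^ 7 + 2 * X ^ 6 + 3 * X ^ 4 + X ^ 2 + 2 * X

theorem coeff_q3335_nonneg (n : ℕ) : 0 ≤ q3335.coeff n := by
  simp only [q3335, coeff_add, coeff_X_pow, coeff_ofNat_mul, coeff_X]
  split_ifs <;> norm_num

theorem coeff_q3335_one : q3335.coeff 1 = 2 := by
  simp [q3335, coeff_X_pow, coeff_X]

theorem add_one_mul_eq_aeval_q3335_sub_one {R : Type*} [CommRing R] [Algebra ℝ R] (x : R) :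
    (x + 1) * (x ^ 9 + x ^ 8 - x ^ 7 + 3 * x ^ 6 - x ^ 5 + x ^ 4 + 2 * x ^ 3 - 2 * x ^ 2 + 3 * x - 1)
      = aeval x q3335 - 1 := by
  simp only [q3335, map_add, map_mul, map_pow, aeval_X, map_ofNat]
  ring

theorem aeval_q3335_eq_one_of_root {R : Type*} [CommRing R] [Algebra ℝ R] {x : R}
    (hx : x ^ 9 + x ^ 8 - x ^ 7 + 3 * x ^ 6 - x ^ 5 + x ^ 4 + 2 * x ^ 3 - 2 * x ^ 2 + 3 * x - 1 = 0) :
    aeval x q3335 = 1 := by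
  rw [← sub_eq_zero, ← add_one_mul_eq_aeval_q3335_sub_one, hx, mul_zero]

theorem stmt_10 :
    ∃ r : ℝ, r ∈ Set.Ioo (0 : ℝ) 1 ∧
      r ^ 9 + r ^ 8 - r ^ 7 + 3 * r ^ 6 - r ^ 5 + r ^ 4 + 2 * r ^ 3 -
        2 * r ^ 2 + 3 * r - 1 = 0 ∧
      (∀ r' : ℝ, r' ∈ Set.Ioo (0 : ℝ) 1 →
        r' ^ 9 + r' ^ 8 - r' ^ 7 + 3 * r' ^ 6 - r' ^ 5 + r' ^ 4 + 2 * r' ^ 3 -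
          2 * r' ^ 2 + 3 * r' - 1 = 0 → r' = r) ∧
      (∀ z : ℂ, z ^ 9 + z ^ 8 - z ^ 7 + 3 * z ^ 6 - z ^ 5 + z ^ 4 + 2 * z ^ 3 -
          2 * z ^ 2 + 3 * z - 1 = 0 → ‖z‖ = r → z = (r : ℂ)) := by
  have hq1 : 0 < q3335.coeff 1 := by rw [coeff_q3335_one]; norm_num
  obtain ⟨r, hr, hqr⟩ : ∃ r ∈ Set.Ioo (0 : ℝ) 1, q3335.eval r = 1 :=
    intermediate_value_Ioo zero_le_one q3335.continuousOn (by simp [q3335]; norm_num)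
  refine ⟨r, hr, ?_, fun r' hr' hg => ?_, fun z hg hzr => ?_⟩
  · have h := add_one_mul_eq_aeval_q3335_sub_one r
    rw [coe_aeval_eq_eval, hqr, sub_self] at h
    exact (mul_eq_zero.1 h).resolve_left (by linarith [hr.1])
  · refine (strictMonoOn_eval_of_coeff_nonneg_s10 coeff_q3335_nonneg hq1).injOn hr'.1.le hr.1.le ?_
    rw [← coe_aeval_eq_eval, aeval_q3335_eq_one_of_root hg, hqr]
  · rw [← hzr]
    refine eq_norm_of_re_aeval_eq_eval_norm coeff_q3335_nonneg hq1 ?_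
    rw [aeval_q3335_eq_one_of_root hg, hzr, hqr, Complex.one_re]
end

section
/- Let r1 be the unique root in (0,1) of t^5 + 2t^4 + 2t^3 + t^2 - 1 (pyramid (2,3,2,3)) and r2 the unique root in (0,1) of t^7 + t^6 + 2t^5 + t^4 + 2t^3 + t - 1 (pyramid (2,3,2,4)). Then r2 < r1, i.e. the growth rate of (2,3,2,4) is strictly larger than that of (2,3,2,3). -/
theorem stmt_11 (r1 r2 : ℝ)
    (hr1 : r1 ∈ Set.Ioo (0 : ℝ) 1)
    (hr2 : r2 ∈ Set.Ioo (0 : ℝ) 1)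
    (h1 : r1 ^ 5 + 2 * r1 ^ 4 + 2 * r1 ^ 3 + r1 ^ 2 - 1 = 0)
    (h2 : r2 ^ 7 + r2 ^ 6 + 2 * r2 ^ 5 + r2 ^ 4 + 2 * r2 ^ 3 + r2 - 1 = 0) :
    r2 < r1 ∧ 1 / r1 < 1 / r2 := by
  obtain ⟨h10, h11⟩ := hr1
  obtain ⟨h20, h21⟩ := hr2
  -- p1(r2) < 0
  have hp2 : r2 ^ 5 + 2 * r2 ^ 4 + 2 * r2 ^ 3 + r2 ^ 2 - 1 < 0 := by
    nlinarith [mul_pos h20 h20, pow_pos h20 3, pow_pos h20 4, pow_pos h20 5,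
      mul_pos (mul_pos h20 h20) h20, sq_nonneg (r2^3 - r2), sq_nonneg (r2^2 - r2),
      mul_pos (pow_pos h20 4) (sub_pos.mpr h21), mul_pos (pow_pos h20 2) (sub_pos.mpr h21)]
  have hlt : r2 < r1 := by
    by_contra hle
    push_neg at hle
    have h2' : r2 ^ 5 + 2 * r2 ^ 4 + 2 * r2 ^ 3 + r2 ^ 2 - 1 ≥
        r1 ^ 5 + 2 * r1 ^ 4 + 2 * r1 ^ 3 + r1 ^ 2 - 1 := by
      have := pow_le_pow_left₀ h10.le hle 5
      have := pow_le_pow_left₀ h10.le hle 4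
      have := pow_le_pow_left₀ h10.le hle 3
      have := pow_le_pow_left₀ h10.le hle 2
      nlinarith
    nlinarith
  exact ⟨hlt, one_div_lt_one_div_of_lt h20 hlt⟩
end

section
/- Let r1 be the unique root in (0,1) of t^2 + 2t - 1 (pyramid (3,3,3,3)) and r2 the unique root in (0,1) of 4t^3 + t^2 + 2t - 1 (pyramid (4,4,4,4)). Then r2 < r1; equivalently, the growth rate of (4,4,4,4) exceeds that of (3,3,3,3). -/
theorem stmt_12 (r1 r2 : ℝ)
    (hr1 : r1 ∈ Set.Ioo (0 : ℝ) 1)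
    (hr2 : r2 ∈ Set.Ioo (0 : ℝ) 1)
    (h1 : r1 ^ 2 + 2 * r1 - 1 = 0)
    (h2 : 4 * r2 ^ 3 + r2 ^ 2 + 2 * r2 - 1 = 0) :
    r2 < r1 ∧ 1 / r1 < 1 / r2 := by
  obtain ⟨h10, h11⟩ := hr1
  obtain ⟨h20, h21⟩ := hr2
  have hlt : r2 < r1 := by
    nlinarith [sq_nonneg (r1 - r2), sq_nonneg (r1 + r2), mul_pos h10 h20,
      mul_pos (mul_pos h10 h20) h20, pow_pos h20 3, pow_pos h10 3]
  exact ⟨hlt, one_div_lt_one_div_of_lt h20 hlt⟩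
end

section
/- Let r be the unique root in (0,1) of h(t) - 1 where h(t) = Σ_{k=1}^n b_k t^k has nonnegative real coefficients with Σ b_k > 1. Then r is the radius of convergence of any power series Σ a_k t^k with nonnegative integer coefficients a_k whose sum function equals P(t)/((t-1)(h(t)-1)) on its disk of convergence, for a polynomial P with P(0)=1 and P having no root in [0, r]. -/
/-!
Write `A = ∑ aₘ Xᵐ` and `D = (1 - X)(1 - h)`. Near `0` both sides of the representation are
convergent power series, so uniqueness of coefficients gives the formal identity `D * A = P`.
Thus `(1 - h) * A = P / (1 - X)` has coefficients bounded by `C = ∑ |pᵢ|`, i.e.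
`aₘ ≤ C + ∑ hᵢ aₘ₋ᵢ`; as `h` has nonnegative coefficients and `h(r) = 1`, this renewal
inequality gives `aₘ rᵐ ≤ C (m + 1)`, so the series converges for `|x| < r`. Conversely,
convergence at some `|x| > r` gives absolute convergence at `r`, where the identity evaluates
to `P(r) = D(r) ∑ aₘ rᵐ = 0`.
-/

open Filter Finset Polynomial Topology

theorem Polynomial.hasSum_coeff_mul_pow {R : Type*} [CommSemiring R] [TopologicalSpace R]
    (P : R[X]) (x : R) : HasSum (fun m => P.coeff m * x ^ m) (P.eval x) := by
  rw [eval_eq_sum_range]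
  exact hasSum_sum_of_ne_finset_zero fun m hm => by
    rw [coeff_eq_zero_of_natDegree_lt (by simpa using hm), zero_mul]

theorem Polynomial.summable_norm_coeff_mul_pow {R : Type*} [NormedCommRing R] (P : R[X]) (x : R) :
    Summable fun m => ‖P.coeff m * x ^ m‖ :=
  summable_of_ne_finset_zero (s := range (P.natDegree + 1)) fun m hm => by
    rw [coeff_eq_zero_of_natDegree_lt (by simpa using hm), zero_mul, norm_zero]

theorem PowerSeries.hasSum_coeff_coe_mul_mul_pow {R : Type*} [NormedCommRing R]
    [CompleteSpace R] (D : R[X]) {A : PowerSeries R} {x : R}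
    (hA : Summable fun m => ‖coeff m A * x ^ m‖) :
    HasSum (fun m => coeff m ((D : PowerSeries R) * A) * x ^ m)
      (D.eval x * ∑' m, coeff m A * x ^ m) := by
  have hD := D.summable_norm_coeff_mul_pow x
  have hterm : ∀ m, ∑ p ∈ antidiagonal m, D.coeff p.1 * x ^ p.1 * (coeff p.2 A * x ^ p.2)
      = coeff m ((D : PowerSeries R) * A) * x ^ m := fun m => by
    rw [coeff_mul, sum_mul]
    refine sum_congr rfl fun p hp => ?_
    rw [← HasAntidiagonal.mem_antidiagonal.mp hp, Polynomial.coeff_coe, pow_add]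
    ring
  rw [← (D.hasSum_coeff_mul_pow x).tsum_eq,
    tsum_mul_tsum_eq_tsum_sum_antidiagonal_of_summable_norm hD hA, tsum_congr hterm]
  exact ((summable_norm_sum_mul_antidiagonal_of_summable_norm hD hA).of_norm.congr hterm).hasSum

open FormalMultilinearSeries in
theorem eq_of_hasSum_mul_pow {𝕜 : Type*} [NontriviallyNormedField 𝕜] [CompleteSpace 𝕜]
    {c d : ℕ → 𝕜} {f : 𝕜 → 𝕜}
    (hc : ∀ᶠ x in 𝓝 0, HasSum (fun m => c m * x ^ m) (f x))
    (hd : ∀ᶠ x in 𝓝 0, HasSum (fun m => d m * x ^ m) (f x)) : c = d := by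
  have he : ∀ᶠ x in 𝓝 0, HasSum (fun m => (c - d) m * x ^ m) 0 := by
    filter_upwards [hc, hd] with x hcx hdx
    simpa [sub_mul] using hcx.sub hdx
  obtain ⟨ε, hε, hball⟩ := Metric.eventually_nhds_iff.mp he
  obtain ⟨x₀, hx₀, hx₀ε⟩ := NormedField.exists_norm_lt 𝕜 hε
  set p := ofScalars 𝕜 (c - d)
  have hradius : 0 < p.radius := by
    refine lt_of_lt_of_le ?_ (p.le_radius_of_tendsto (r := ‖x₀‖₊) (l := 0) ?_)
    · simpa using hx₀
    · simpa [p, ofScalars_norm, norm_mul, norm_pow] using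
        (hball (by simpa using hx₀ε)).summable.tendsto_atTop_zero.norm
  have hsum : p.sum =ᶠ[𝓝 0] 0 := by
    filter_upwards [he] with x hx
    simpa only [FormalMultilinearSeries.sum, p, ofScalars_apply_eq, smul_eq_mul,
      Pi.zero_apply] using hx.tsum_eq
  have hp : p = 0 :=
    (p.hasFPowerSeriesOnBall hradius).hasFPowerSeriesAt.eq_zero_of_eventually hsum
  exact sub_eq_zero.mp ((ofScalars_series_eq_zero (E := 𝕜)).mp hp)

theorem le_mul_succ_of_le_add_sum_antidiagonal {q α : ℕ → ℝ} {C : ℝ} (hC : 0 ≤ C)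
    (hq : ∀ i, 0 ≤ q i) (hq0 : q 0 = 0) (hqle : ∀ m, ∑ i ∈ range (m + 1), q i ≤ 1)
    (hα : ∀ m, α m ≤ C + ∑ p ∈ antidiagonal m, q p.1 * α p.2) (m : ℕ) :
    α m ≤ C * (m + 1) := by
  induction m using Nat.strong_induction_on with
  | _ m ih =>
  have hterm : ∀ p ∈ antidiagonal m, q p.1 * α p.2 ≤ q p.1 * (C * m) := by
    rintro ⟨i, j⟩ hij
    rw [HasAntidiagonal.mem_antidiagonal] at hij
    rcases Nat.eq_zero_or_pos i with rfl | hi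
    · simp [hq0]
    · refine mul_le_mul_of_nonneg_left ((ih j (by omega)).trans ?_) (hq i)
      exact mul_le_mul_of_nonneg_left (by exact_mod_cast (by omega : j + 1 ≤ m)) hC
  calc α m ≤ C + ∑ p ∈ antidiagonal m, q p.1 * (C * m) :=
        (hα m).trans (add_le_add_right (sum_le_sum hterm) C)
    _ = C + (∑ i ∈ range (m + 1), q i) * (C * m) := by
      rw [← sum_mul, Nat.sum_antidiagonal_eq_sum_range_succ_mk]
    _ ≤ C + 1 * (C * m) := by gcongr; exact hqle m
    _ = C * (m + 1) := by ring

open FormalMultilinearSeries in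
theorem summable_norm_mul_pow_of_summable_mul_pow {𝕜 : Type*} [NontriviallyNormedField 𝕜]
    {c : ℕ → 𝕜} {x y : 𝕜} (hx : Summable fun m => c m * x ^ m) (hy : ‖y‖ < ‖x‖) :
    Summable fun m => ‖c m * y ^ m‖ := by
  set p := ofScalars 𝕜 c
  have hradius : (‖x‖₊ : ENNReal) ≤ p.radius :=
    p.le_radius_of_tendsto (l := 0) (by
      simpa [p, ofScalars_norm, norm_mul, norm_pow] using hx.tendsto_atTop_zero.norm)
  simpa [p, ofScalars_norm, norm_mul, norm_pow] using
    p.summable_norm_mul_pow (r := ‖y‖₊) (lt_of_lt_of_le (by exact_mod_cast hy) hradius)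

theorem summable_mul_pow_of_norm_mul_pow_le {c : ℕ → ℝ} {r C x : ℝ} (hr : 0 < r)
    (hc : ∀ m, ‖c m‖ * r ^ m ≤ C * (m + 1)) (hx : |x| < r) : Summable fun m => c m * x ^ m := by
  set t := |x| / r
  have ht0 : 0 ≤ t := div_nonneg (abs_nonneg x) hr.le
  have ht : ‖t‖ < 1 := by rwa [Real.norm_eq_abs, abs_of_nonneg ht0, div_lt_one hr]
  refine Summable.of_norm_bounded (((summable_pow_mul_geometric_of_norm_lt_one 1 ht).add
    (summable_geometric_of_norm_lt_one ht)).mul_left C) fun m => ?_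
  calc ‖c m * x ^ m‖ = ‖c m‖ * r ^ m * t ^ m := by
        simp only [t, norm_mul, norm_pow, Real.norm_eq_abs, div_pow]
        field_simp [hr.ne']
    _ ≤ C * (m + 1) * t ^ m := mul_le_mul_of_nonneg_right (hc m) (pow_nonneg ht0 m)
    _ = C * ((m : ℝ) ^ 1 * t ^ m + t ^ m) := by ring

namespace PowerSeries

variable {𝕜 : Type*} [NontriviallyNormedField 𝕜] [CompleteSpace 𝕜]

theorem coe_mul_eq_of_hasSum {D P : 𝕜[X]} {A : PowerSeries 𝕜} (hD : D.eval 0 ≠ 0)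
    (hA : ∀ᶠ x in 𝓝 0, Summable fun m => ‖coeff m A * x ^ m‖)
    (hAP : ∀ᶠ x in 𝓝 0, HasSum (fun m => coeff m A * x ^ m) (P.eval x / D.eval x)) :
    (D : PowerSeries 𝕜) * A = P := by
  have hDA : ∀ᶠ x in 𝓝 0, HasSum (fun m => coeff m ((D : PowerSeries 𝕜) * A) * x ^ m)
      (P.eval x) := by
    filter_upwards [hA, hAP, D.continuous.continuousAt.eventually_ne hD] with x hx hxP hDx
    simpa [hxP.tsum_eq, mul_div_cancel₀ _ hDx] using hasSum_coeff_coe_mul_mul_pow D hx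
  have h := eq_of_hasSum_mul_pow hDA (Eventually.of_forall P.hasSum_coeff_mul_pow)
  ext m
  simpa using congrFun h m

theorem eval_eq_mul_tsum_of_coe_mul_eq {D P : 𝕜[X]} {A : PowerSeries 𝕜} {x : 𝕜}
    (h : (D : PowerSeries 𝕜) * A = P) (hA : Summable fun m => ‖coeff m A * x ^ m‖) :
    P.eval x = D.eval x * ∑' m, coeff m A * x ^ m := by
  have hDA := hasSum_coeff_coe_mul_mul_pow D hA
  simp only [h, Polynomial.coeff_coe] at hDA
  exact (P.hasSum_coeff_mul_pow x).unique hDA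

theorem coeff_mul_pow_le_of_coe_mul_eq {Q P : ℝ[X]} {A : PowerSeries ℝ} {r : ℝ}
    (hQ : ∀ i, 0 ≤ Q.coeff i) (hQ0 : Q.coeff 0 = 0) (hr0 : 0 ≤ r) (hr1 : r ≤ 1)
    (hQr : Q.eval r ≤ 1) (h : (((1 - Polynomial.X) * (1 - Q) : ℝ[X]) : PowerSeries ℝ) * A = P)
    (m : ℕ) : coeff m A * r ^ m ≤ (∑ i ∈ range (P.natDegree + 1), |P.coeff i|) * (m + 1) := by
  set C := ∑ i ∈ range (P.natDegree + 1), |P.coeff i|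
  have hc : (1 - (Q : PowerSeries ℝ)) * A = mk 1 * (P : PowerSeries ℝ) := by
    calc (1 - (Q : PowerSeries ℝ)) * A
        = mk 1 * (1 - PowerSeries.X) * ((1 - (Q : PowerSeries ℝ)) * A) := by
          rw [mk_one_mul_one_sub_eq_one, one_mul]
      _ = mk 1 * (P : PowerSeries ℝ) := by rw [← h]; push_cast; ring
  have hcC : ∀ m, |coeff m (mk 1 * (P : PowerSeries ℝ))| ≤ C := fun m => by
    have hP : HasSum (fun i => |P.coeff i|) C := hasSum_sum_of_ne_finset_zero fun i hi => by
      rw [coeff_eq_zero_of_natDegree_lt (by simpa using hi), abs_zero]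
    rw [coeff_mul, ← Nat.sum_antidiagonal_swap]
    simp only [coeff_mk, Pi.one_apply, one_mul, Polynomial.coeff_coe, Prod.fst_swap,
      Prod.snd_swap]
    rw [Nat.sum_antidiagonal_eq_sum_range_succ_mk]
    exact (abs_sum_le_sum_abs _ _).trans (sum_le_hasSum _ (fun i _ => abs_nonneg _) hP)
  refine le_mul_succ_of_le_add_sum_antidiagonal (q := fun i => Q.coeff i * r ^ i)
    (α := fun m => coeff m A * r ^ m)
    (sum_nonneg fun i _ => abs_nonneg _) (fun i => mul_nonneg (hQ i) (pow_nonneg hr0 i))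
    (by simp [hQ0])
    (fun m => (sum_le_hasSum _ (fun i _ => mul_nonneg (hQ i) (pow_nonneg hr0 i))
      (Q.hasSum_coeff_mul_pow r)).trans hQr) (fun m => ?_) m
  have hm := congrArg (coeff m) hc
  rw [sub_mul, one_mul, map_sub, coeff_mul] at hm
  simp only [Polynomial.coeff_coe] at hm
  have hterm : ∑ p ∈ antidiagonal m, Q.coeff p.1 * coeff p.2 A * r ^ m
      = ∑ p ∈ antidiagonal m, Q.coeff p.1 * r ^ p.1 * (coeff p.2 A * r ^ p.2) :=
    sum_congr rfl fun p hp => by rw [← HasAntidiagonal.mem_antidiagonal.mp hp, pow_add]; ring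
  have hsplit : coeff m A * r ^ m = coeff m (mk 1 * (P : PowerSeries ℝ)) * r ^ m
      + ∑ p ∈ antidiagonal m, Q.coeff p.1 * r ^ p.1 * (coeff p.2 A * r ^ p.2) := by
    rw [← hm, sub_mul, sum_mul, hterm, sub_add_cancel]
  rw [hsplit]
  gcongr
  exact (mul_le_mul_of_nonneg_right (le_abs_self _) (pow_nonneg hr0 m)).trans
    ((mul_le_of_le_one_right (abs_nonneg _) (pow_le_one₀ hr0 hr1)).trans (hcC m))

end PowerSeries

-- The paper's `h(t) = ∑_{k=1}^n b_k t^k`, with `b` indexed from `0`.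
noncomputable def hPoly {n : ℕ} (b : Fin n → ℝ) : ℝ[X] :=
  ∑ k, Polynomial.C (b k) * Polynomial.X ^ ((k : ℕ) + 1)

theorem eval_hPoly {n : ℕ} (b : Fin n → ℝ) (x : ℝ) :
    (hPoly b).eval x = ∑ k, b k * x ^ ((k : ℕ) + 1) := by
  simp [hPoly, eval_finsetSum]

theorem coeff_hPoly_nonneg {n : ℕ} {b : Fin n → ℝ} (hb : ∀ k, 0 ≤ b k) (i : ℕ) :
    0 ≤ (hPoly b).coeff i := by
  rw [hPoly, finsetSum_coeff]
  refine sum_nonneg fun k _ => ?_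
  rw [coeff_C_mul, coeff_X_pow]
  split_ifs <;> simp [hb k]

theorem coeff_hPoly_zero {n : ℕ} (b : Fin n → ℝ) : (hPoly b).coeff 0 = 0 := by
  simp [hPoly, finsetSum_coeff, coeff_X_pow]

theorem stmt_14_general (n : ℕ) (b : Fin n → ℝ) (hb : ∀ k, 0 ≤ b k)
    (r : ℝ) (hr : r ∈ Set.Ioo (0 : ℝ) 1)
    (hroot : (∑ k, b k * r ^ ((k : ℕ) + 1)) = 1)
    (a : ℕ → ℕ) (P : Polynomial ℝ)
    (hPne : ∀ x ∈ Set.Icc (0 : ℝ) r, P.eval x ≠ 0)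
    (hrep : ∃ R : ℝ, 0 < R ∧ ∀ x : ℝ, |x| < R →
      HasSum (fun m => (a m : ℝ) * x ^ m)
        (P.eval x / ((x - 1) * ((∑ k, b k * x ^ ((k : ℕ) + 1)) - 1)))) :
    (∀ x : ℝ, |x| < r → Summable (fun m => (a m : ℝ) * x ^ m)) ∧
    (∀ x : ℝ, r < |x| → ¬ Summable (fun m => (a m : ℝ) * x ^ m)) := by
  obtain ⟨R, hR, hrep⟩ := hrep
  set A : PowerSeries ℝ := PowerSeries.mk fun m => (a m : ℝ)
  have hnorm : ∀ x m, ‖PowerSeries.coeff m A * x ^ m‖ = a m * |x| ^ m := fun x m => by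
    simp [A]
  have hnear : ∀ᶠ x in 𝓝 (0 : ℝ), |x| < R := by simpa using eventually_abs_sub_lt 0 hR
  have hid : (((1 - Polynomial.X) * (1 - hPoly b) : ℝ[X]) : PowerSeries ℝ) * A = P := by
    refine PowerSeries.coe_mul_eq_of_hasSum
      (by simp [coeff_hPoly_zero, ← coeff_zero_eq_eval_zero]) ?_ ?_
    · filter_upwards [hnear] with x hx
      simpa only [hnorm] using (hrep |x| (by rwa [abs_abs])).summable
    · filter_upwards [hnear] with x hx
      have hD : ((1 - Polynomial.X) * (1 - hPoly b)).eval x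
          = (x - 1) * ((∑ k, b k * x ^ ((k : ℕ) + 1)) - 1) := by
        simp only [eval_mul, eval_sub, eval_one, eval_X, eval_hPoly]
        ring
      simpa [A, hD] using hrep x hx
  have hbound : ∀ m,
      ‖(a m : ℝ)‖ * r ^ m ≤ (∑ i ∈ range (P.natDegree + 1), |P.coeff i|) * (m + 1) := fun m => by
    simpa [A] using PowerSeries.coeff_mul_pow_le_of_coe_mul_eq (coeff_hPoly_nonneg hb)
      (coeff_hPoly_zero b) hr.1.le hr.2.le (by rw [eval_hPoly, hroot]) hid m
  refine ⟨fun x hx => summable_mul_pow_of_norm_mul_pow_le hr.1 hbound hx, fun x hx hsum => ?_⟩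
  have habs : Summable fun m => ‖PowerSeries.coeff m A * r ^ m‖ :=
    summable_norm_mul_pow_of_summable_mul_pow (by simpa [A] using hsum)
      (by rwa [Real.norm_eq_abs, Real.norm_eq_abs, abs_of_pos hr.1])
  refine hPne r ⟨hr.1.le, le_rfl⟩ ?_
  rw [PowerSeries.eval_eq_mul_tsum_of_coe_mul_eq hid habs]
  simp [eval_hPoly, hroot]

theorem stmt_14 (n : ℕ) (b : Fin n → ℝ) (hb : ∀ k, 0 ≤ b k)
    (hsum : 1 < ∑ k, b k)
    (r : ℝ) (hr : r ∈ Set.Ioo (0 : ℝ) 1)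
    (hroot : (∑ k, b k * r ^ ((k : ℕ) + 1)) = 1)
    (a : ℕ → ℕ) (P : Polynomial ℝ)
    (hP0 : P.eval 0 = 1)
    (hPne : ∀ x ∈ Set.Icc (0 : ℝ) r, P.eval x ≠ 0)
    (hrep : ∃ R : ℝ, 0 < R ∧ ∀ x : ℝ, |x| < R →
      HasSum (fun m => (a m : ℝ) * x ^ m)
        (P.eval x / ((x - 1) * ((∑ k, b k * x ^ ((k : ℕ) + 1)) - 1)))) :
    (∀ x : ℝ, |x| < r → Summable (fun m => (a m : ℝ) * x ^ m)) ∧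
    (∀ x : ℝ, r < |x| → ¬ Summable (fun m => (a m : ℝ) * x ^ m)) :=
  stmt_14_general n b hb r hr hroot a P hPne hrep
end
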